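/- arXiv:2605.16836 — 6 statements merged into one kernel-verified Lean document; each statement's English description precedes it below -/
import Mathlib

section
/- Let (Ω, F, q) be a probability space and λ : Ω → ℝ a random variable with λ > 0 almost surely, λ integrable, log λ integrable, and log(1 − exp(−λ)) integrable. Then E_q[ log(1 − exp(−λ)) ] ≥ −E_q[λ] + log( exp(exp(E_q[log λ])) − 1 ). Moreover, equality holds when λ is almost surely constant. -/
open MeasureTheory Real

/-!
With `g t = log (exp (exp t) - 1)` one has `g (log x) = x + log (1 - exp (-x))` for `x > 0`,
so the inequality is Jensen's inequality `g (E[log λ]) ≤ E[g (log λ)]` for the convex function `g`.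
Convexity holds because `g' t = φ (exp t)` with `φ y = y exp y / (exp y - 1)`, and `φ` increases
on `(0, ∞)` because `exp y > 1 + y` there.
-/

lemma Real.exp_sub_one_pos {x : ℝ} (hx : 0 < x) : 0 < exp x - 1 :=
  sub_pos.mpr (one_lt_exp_iff.mpr hx)

lemma Real.log_one_sub_exp_neg {x : ℝ} (hx : 0 < x) :
    log (1 - exp (-x)) = -x + log (exp x - 1) := by
  have hfactor : 1 - exp (-x) = (exp x - 1) * exp (-x) := by
    rw [sub_mul, ← exp_add]; simp
  have hne : exp x - 1 ≠ 0 := (exp_sub_one_pos hx).ne'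
  rw [hfactor, log_mul hne (exp_ne_zero _), log_exp]
  ring

lemma strictMonoOn_mul_exp_div_exp_sub_one :
    StrictMonoOn (fun y => y * exp y / (exp y - 1)) (Set.Ioi 0) := by
  have hden : ∀ y ∈ Set.Ioi (0 : ℝ), exp y - 1 ≠ 0 :=
    fun y hy => (exp_sub_one_pos hy).ne'
  refine strictMonoOn_of_deriv_pos (convex_Ioi 0) ?_ fun y hy => ?_
  · exact ((continuous_id.mul continuous_exp).continuousOn).div
      (continuous_exp.sub continuous_const).continuousOn hden
  rw [interior_Ioi] at hy
  have hderiv : HasDerivAt (fun y => y * exp y / (exp y - 1))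
      ((exp y * (exp y - 1 - y)) / (exp y - 1) ^ 2) y :=
    (((hasDerivAt_id' y).fun_mul (hasDerivAt_exp y)).fun_div
      ((hasDerivAt_exp y).sub_const 1) (hden y hy)).congr_deriv (by ring)
  rw [hderiv.deriv]
  have hy' : y + 1 < exp y := add_one_lt_exp hy.ne'
  apply div_pos
  · exact mul_pos (exp_pos y) (by linarith)
  · exact pow_pos (exp_sub_one_pos hy) 2

lemma hasDerivAt_log_exp_exp_sub_one (t : ℝ) :
    HasDerivAt (fun t => log (exp (exp t) - 1)) (exp t * exp (exp t) / (exp (exp t) - 1)) t := by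
  have hne : exp (exp t) - 1 ≠ 0 := (exp_sub_one_pos (exp_pos t)).ne'
  have hinner : HasDerivAt (fun t => exp (exp t) - 1) (exp (exp t) * exp t) t :=
    ((hasDerivAt_exp (exp t)).comp t (hasDerivAt_exp t)).sub_const 1
  convert hinner.log hne using 1
  ring

lemma convexOn_log_exp_exp_sub_one :
    ConvexOn ℝ Set.univ (fun t => log (exp (exp t) - 1)) := by
  have hdiff : Differentiable ℝ (fun t => log (exp (exp t) - 1)) :=
    fun t => (hasDerivAt_log_exp_exp_sub_one t).differentiableAt
  refine MonotoneOn.convexOn_of_deriv convex_univ hdiff.continuous.continuousOn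
    hdiff.differentiableOn fun a _ b _ hab => ?_
  rw [(hasDerivAt_log_exp_exp_sub_one a).deriv, (hasDerivAt_log_exp_exp_sub_one b).deriv]
  exact strictMonoOn_mul_exp_div_exp_sub_one.monotoneOn (exp_pos a) (exp_pos b)
    (exp_le_exp.mpr hab)

section

variable {Ω : Type*} [MeasurableSpace Ω] {q : Measure Ω} [IsProbabilityMeasure q] {lam : Ω → ℝ}

lemma integral_log_one_sub_exp_neg_ge
    (hpos : ∀ᵐ ω ∂q, 0 < lam ω) (hint : Integrable lam q)
    (hlogint : Integrable (fun ω => log (lam ω)) q)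
    (hloglink : Integrable (fun ω => log (1 - exp (-lam ω))) q) :
    -(∫ ω, lam ω ∂q) + log (exp (exp (∫ ω, log (lam ω) ∂q)) - 1)
      ≤ ∫ ω, log (1 - exp (-lam ω)) ∂q := by
  set g : ℝ → ℝ := fun t => log (exp (exp t) - 1)
  have hcomp : (fun ω => g (log (lam ω))) =ᵐ[q] fun ω => lam ω + log (1 - exp (-lam ω)) := by
    filter_upwards [hpos] with ω hω
    simp only [g, exp_log hω, log_one_sub_exp_neg hω]
    ring
  have hjensen : g (∫ ω, log (lam ω) ∂q) ≤ ∫ ω, g (log (lam ω)) ∂q :=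
    convexOn_log_exp_exp_sub_one.map_integral_le
      (fun t _ => (hasDerivAt_log_exp_exp_sub_one t).continuousAt.continuousWithinAt)
      isClosed_univ (.of_forall fun _ => Set.mem_univ _) hlogint
      ((hint.add hloglink).congr hcomp.symm)
  rw [integral_congr_ae hcomp, integral_add hint hloglink] at hjensen
  linarith

lemma integral_log_one_sub_exp_neg_eq_of_ae_eq_const
    (hpos : ∀ᵐ ω ∂q, 0 < lam ω) {c : ℝ} (hc : ∀ᵐ ω ∂q, lam ω = c) :
    ∫ ω, log (1 - exp (-lam ω)) ∂q
      = -(∫ ω, lam ω ∂q) + log (exp (exp (∫ ω, log (lam ω) ∂q)) - 1) := by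
  have hcpos : 0 < c := by
    obtain ⟨ω, hω, rfl⟩ := (hpos.and hc).exists
    exact hω
  have hconst {f : ℝ → ℝ} : ∫ ω, f (lam ω) ∂q = f c := by
    rw [integral_congr_ae (hc.mono fun ω hω => congrArg f hω)]
    simp
  rw [hconst (f := fun x => log (1 - exp (-x))), hconst (f := fun x => x),
    hconst (f := log), exp_log hcpos, log_one_sub_exp_neg hcpos]

end

/-- Lower bound for `E[log(1 - exp(-λ))]`, with equality in the a.s. constant case. -/
theorem expected_log_one_sub_exp_neg_lower_bound
    {Ω : Type*} [MeasurableSpace Ω] (q : Measure Ω) [IsProbabilityMeasure q]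
    (lam : Ω → ℝ)
    (hpos : ∀ᵐ ω ∂q, 0 < lam ω)
    (hint : Integrable lam q)
    (hlogint : Integrable (fun ω => Real.log (lam ω)) q)
    (hloglink : Integrable (fun ω => Real.log (1 - Real.exp (-lam ω))) q) :
    (∫ ω, Real.log (1 - Real.exp (-lam ω)) ∂q
      ≥ -(∫ ω, lam ω ∂q)
        + Real.log (Real.exp (Real.exp (∫ ω, Real.log (lam ω) ∂q)) - 1))
    ∧ ∀ c : ℝ, (∀ᵐ ω ∂q, lam ω = c) →
        ∫ ω, Real.log (1 - Real.exp (-lam ω)) ∂q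
          = -(∫ ω, lam ω ∂q)
            + Real.log (Real.exp (Real.exp (∫ ω, Real.log (lam ω) ∂q)) - 1) :=
  ⟨integral_log_one_sub_exp_neg_ge hpos hint hlogint hloglink,
    fun _ hc => integral_log_one_sub_exp_neg_eq_of_ae_eq_const hpos hc⟩
end

section
/- Fix S ∈ ℝ. For any probability mass function r on the positive integers {1, 2, 3, …} such that Σ_{x≥1} r(x)·x < ∞, Σ_{x≥1} r(x)·log(x!) < ∞, and the entropy H(r) = −Σ_{x≥1} r(x) log r(x) is finite, one has S · Σ_{x≥1} r(x)·x − Σ_{x≥1} r(x)·log(x!) + H(r) ≤ log( exp(exp(S)) − 1 ). Moreover, equality is attained by the zero-truncated Poisson distribution r*(x) = exp(S·x) / ( x! · (exp(exp(S)) − 1) ) for x ≥ 1. -/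
/-!
Since `log (ztPoisson S x) = S x - log x! - log (exp (exp S) - 1)` for `x ≥ 1`, the left-hand side
equals `log (exp (exp S) - 1) + ∑ r x log (ztPoisson S x / r x)`, and Gibbs' inequality
`r log (q / r) ≤ q - r` bounds the last sum by `∑ ztPoisson S - ∑ r = 0`, with equality at
`r = ztPoisson S`.
-/

open Real

/-- The zero-truncated Poisson pmf with log-rate `S`, supported on the positive integers. -/
noncomputable def ztPoisson (S : ℝ) (x : ℕ) : ℝ :=
  if x = 0 then 0
  else Real.exp (S * x) / ((Nat.factorial x : ℝ) * (Real.exp (Real.exp S) - 1))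

open scoped Nat

lemma Real.mul_log_sub_mul_log_le {r q : ℝ} (hr : 0 ≤ r) (hq : 0 ≤ q) (hqr : q = 0 → r = 0) :
    r * log q - r * log r ≤ q - r := by
  rcases hr.eq_or_lt with rfl | hr
  · simpa using hq
  have hq : 0 < q := hq.lt_of_ne fun h => hr.ne' (hqr h.symm)
  calc r * log q - r * log r = r * log (q / r) := by rw [log_div hq.ne' hr.ne']; ring
    _ ≤ r * (q / r - 1) := mul_le_mul_of_nonneg_left (log_le_sub_one_of_pos (by positivity)) hr.le
    _ = q - r := by field_simp

theorem Real.tsum_mul_log_sub_tsum_mul_log_le {α : Type*} {r q : α → ℝ} (hr : ∀ x, 0 ≤ r x)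
    (hq : ∀ x, 0 ≤ q x) (hqr : ∀ x, q x = 0 → r x = 0) (hrs : Summable r) (hqs : Summable q)
    (hrq : Summable fun x => r x * log (q x)) (hrr : Summable fun x => r x * log (r x)) :
    ∑' x, r x * log (q x) - ∑' x, r x * log (r x) ≤ ∑' x, q x - ∑' x, r x := by
  rw [← hrq.tsum_sub hrr, ← hqs.tsum_sub hrs]
  exact (hrq.sub hrr).tsum_le_tsum (fun x => mul_log_sub_mul_log_le (hr x) (hq x) (hqr x))
    (hqs.sub hrs)

lemma Real.log_factorial_le_four_pow (x : ℕ) : log (x ! : ℝ) ≤ 4 ^ x := by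
  have hx : (x : ℝ) ≤ 2 ^ x := by exact_mod_cast Nat.lt_two_pow_self.le
  calc log (x ! : ℝ) ≤ log ((x : ℝ) ^ x) :=
        log_le_log (by positivity) (by exact_mod_cast Nat.factorial_le_pow x)
    _ = x * log x := log_pow x x
    _ ≤ x * x := mul_le_mul_of_nonneg_left (log_le_self x.cast_nonneg) x.cast_nonneg
    _ ≤ 2 ^ x * 2 ^ x := mul_le_mul hx hx x.cast_nonneg (by positivity)
    _ = 4 ^ x := by rw [← mul_pow]; norm_num

namespace ztPoisson

variable (S : ℝ)

lemma exp_exp_sub_one_pos : 0 < exp (exp S) - 1 := by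
  simpa using exp_pos S

lemma apply_zero : ztPoisson S 0 = 0 := if_pos rfl

lemma apply_of_ne_zero {x : ℕ} (hx : x ≠ 0) :
    ztPoisson S x = exp S ^ x / x ! / (exp (exp S) - 1) := by
  rw [ztPoisson, if_neg hx, ← exp_nat_mul, mul_comm, div_div]

lemma pos {x : ℕ} (hx : x ≠ 0) : 0 < ztPoisson S x := by
  have := exp_exp_sub_one_pos S
  rw [apply_of_ne_zero S hx]
  positivity

lemma nonneg (x : ℕ) : 0 ≤ ztPoisson S x := by
  rcases eq_or_ne x 0 with rfl | hx
  · exact (apply_zero S).ge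
  · exact (pos S hx).le

lemma eq_zero_iff {x : ℕ} : ztPoisson S x = 0 ↔ x = 0 :=
  ⟨fun h => by_contra fun hx => (pos S hx).ne' h, fun hx => hx ▸ apply_zero S⟩

lemma le_pow_div_factorial (x : ℕ) :
    ztPoisson S x ≤ exp S ^ x / x ! / (exp (exp S) - 1) := by
  have := exp_exp_sub_one_pos S
  rcases eq_or_ne x 0 with rfl | hx
  · rw [apply_zero]; positivity
  · exact (apply_of_ne_zero S hx).le

lemma log_apply {x : ℕ} (hx : x ≠ 0) :
    log (ztPoisson S x) = S * x - log (x ! : ℝ) - log (exp (exp S) - 1) := by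
  have := exp_exp_sub_one_pos S
  rw [ztPoisson, if_neg hx, log_div (exp_ne_zero _) (by positivity),
    log_mul (by positivity) this.ne', log_exp]
  ring

/-- The exponential series of `exp S` without its constant term. -/
theorem hasSum : HasSum (ztPoisson S) 1 := by
  have hZ := exp_exp_sub_one_pos S
  have h := ((NormedSpace.expSeries_div_hasSum_exp (exp S)).sub
    (hasSum_ite_eq 0 (1 : ℝ))).div_const (exp (exp S) - 1)
  rw [← exp_eq_exp_ℝ, div_self hZ.ne'] at h
  refine h.congr_fun fun x => ?_
  rcases eq_or_ne x 0 with rfl | hx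
  · simp [apply_zero]
  · simp [apply_of_ne_zero S hx, hx]

theorem summable_mul {f : ℕ → ℝ} {d : ℝ} (hf₀ : ∀ x, 0 ≤ f x) (hf : ∀ x, f x ≤ d ^ x) :
    Summable fun x => ztPoisson S x * f x := by
  have hZ := exp_exp_sub_one_pos S
  refine .of_nonneg_of_le (fun x => mul_nonneg (nonneg S x) (hf₀ x)) (fun x => ?_)
    ((summable_pow_div_factorial (exp S * d)).div_const (exp (exp S) - 1))
  calc ztPoisson S x * f x ≤ exp S ^ x / x ! / (exp (exp S) - 1) * d ^ x :=
        mul_le_mul (le_pow_div_factorial S x) (hf x) (hf₀ x) (by positivity)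
    _ = (exp S * d) ^ x / x ! / (exp (exp S) - 1) := by rw [mul_pow]; ring

theorem hasSum_mul_log {r : ℕ → ℝ} (hr₀ : r 0 = 0) (hr : HasSum r 1)
    (hrx : Summable fun x => r x * x) (hrf : Summable fun x => r x * log (x ! : ℝ)) :
    HasSum (fun x => r x * log (ztPoisson S x))
      (S * ∑' x, r x * x - ∑' x, r x * log (x ! : ℝ) - log (exp (exp S) - 1)) := by
  have h := ((hrx.hasSum.mul_left S).sub hrf.hasSum).sub (hr.mul_left (log (exp (exp S) - 1)))
  rw [mul_one] at h
  refine h.congr_fun fun x => ?_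
  rcases eq_or_ne x 0 with rfl | hx
  · simp [hr₀]
  · rw [log_apply S hx]
    ring

end ztPoisson

/-- Gibbs variational bound for the zero-truncated Poisson family. -/
theorem gibbs_bound_truncated_poisson (S : ℝ) :
    (∀ r : ℕ → ℝ, r 0 = 0 → (∀ x, 0 ≤ r x) → Summable r → (∑' x, r x) = 1 →
      Summable (fun x => r x * (x : ℝ)) →
      Summable (fun x => r x * Real.log (Nat.factorial x : ℝ)) →
      Summable (fun x => r x * Real.log (r x)) →
      S * (∑' x, r x * (x : ℝ)) - (∑' x, r x * Real.log (Nat.factorial x : ℝ))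
          + (-∑' x, r x * Real.log (r x))
        ≤ Real.log (Real.exp (Real.exp S) - 1))
    ∧ S * (∑' x, ztPoisson S x * (x : ℝ))
        - (∑' x, ztPoisson S x * Real.log (Nat.factorial x : ℝ))
        + (-∑' x, ztPoisson S x * Real.log (ztPoisson S x))
      = Real.log (Real.exp (Real.exp S) - 1) := by
  constructor
  · intro r hr₀ hr hrs hr₁ hrx hrf hrr
    have hcross := ztPoisson.hasSum_mul_log S hr₀ (hr₁ ▸ hrs.hasSum) hrx hrf
    have hgibbs := tsum_mul_log_sub_tsum_mul_log_le hr (ztPoisson.nonneg S)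
      (fun x hx => by rw [(ztPoisson.eq_zero_iff S).1 hx, hr₀])
      hrs (ztPoisson.hasSum S).summable hcross.summable hrr
    rw [hcross.tsum_eq, (ztPoisson.hasSum S).tsum_eq, hr₁] at hgibbs
    linarith
  · have hx := ztPoisson.summable_mul S (fun x => x.cast_nonneg)
      (fun x => (by exact_mod_cast Nat.lt_two_pow_self.le : (x : ℝ) ≤ 2 ^ x))
    have hlog := ztPoisson.summable_mul S (fun x => log_nonneg (by exact_mod_cast x.factorial_pos))
      log_factorial_le_four_pow
    rw [(ztPoisson.hasSum_mul_log S (ztPoisson.apply_zero S) (ztPoisson.hasSum S) hx hlog).tsum_eq]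
    ring
end

section
/- Let (R, 𝓡) and (E, 𝓔) be measurable spaces, let κ be a Markov kernel from R to E, and let μ and ν be probability measures on R. Then the Kullback–Leibler divergence satisfies KL( μ ⊗ κ ‖ ν ⊗ κ ) = KL( μ ‖ ν ), where μ ⊗ κ denotes the measure on R × E given by (μ ⊗ κ)(A × B) = ∫_A κ(r)(B) dμ(r). -/
open MeasureTheory ProbabilityTheory
open scoped ENNReal Classical

/-- Kullback–Leibler divergence: `∫ log(dP/dQ) dP` when `P ≪ Q` and the log-likelihood
ratio is integrable, `∞` otherwise. -/
noncomputable def klDiv {α : Type*} [MeasurableSpace α] (P Q : Measure α) : ℝ≥0∞ :=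
  if P ≪ Q ∧ Integrable (llr P Q) P then ENNReal.ofReal (∫ x, llr P Q x ∂P) else ⊤

/- Mathlib's `InformationTheory.klDiv` adds the correction term `ν univ - μ univ`, which vanishes
for measures of equal mass. -/
lemma klDiv_eq_informationTheory_klDiv {α : Type*} [MeasurableSpace α] {μ ν : Measure α}
    (h : μ Set.univ = ν Set.univ) : klDiv μ ν = InformationTheory.klDiv μ ν := by
  by_cases hfin : μ ≪ ν ∧ Integrable (llr μ ν) μ
  · rw [klDiv, if_pos hfin, InformationTheory.klDiv_of_ac_of_integrable hfin.1 hfin.2,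
      measureReal_def, measureReal_def, h, add_sub_cancel_right]
  · rw [klDiv, if_neg hfin, eq_comm, InformationTheory.klDiv_eq_top_iff]
    exact fun hac hint => hfin ⟨hac, hint⟩

/-- Pushing both measures through the same Markov kernel leaves the KL
divergence unchanged. -/
theorem klDiv_compProd_same_kernel
    {R E : Type*} [MeasurableSpace R] [MeasurableSpace E]
    (κ : Kernel R E) [IsMarkovKernel κ]
    (μ ν : Measure R) [IsProbabilityMeasure μ] [IsProbabilityMeasure ν] :
    klDiv (μ.compProd κ) (ν.compProd κ) = klDiv μ ν := by
  rw [klDiv_eq_informationTheory_klDiv (by simp), klDiv_eq_informationTheory_klDiv (by simp)]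
  exact InformationTheory.klDiv_compProd_left μ ν κ
end

section
/- Let n, m ∈ ℕ, λ̄ > 0, and 0 < c₀ ≤ C₀ with C₀·λ̄ ≤ 1/2. Let Λ = (λ_{ij}) and Λ' = (λ'_{ij}) be matrices in ℝ^{n×m} all of whose entries lie in the interval [c₀λ̄, C₀λ̄]. Let P_Λ = ⊗_{i,j} Bern(1 − exp(−λ_{ij})) and P_{Λ'} = ⊗_{i,j} Bern(1 − exp(−λ'_{ij})) be the corresponding product Bernoulli measures on {0,1}^{n×m}. Then (e^{−1} / (2·C₀·λ̄)) · Σ_{i,j} (λ_{ij} − λ'_{ij})² ≤ KL( P_Λ ‖ P_{Λ'} ) ≤ (4 / (c₀·λ̄)) · Σ_{i,j} (λ_{ij} − λ'_{ij})². -/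
open MeasureTheory ProbabilityTheory Real
open scoped ENNReal Classical

/-- The Bernoulli measure on `Bool` with success probability `p`. -/
noncomputable def bern (p : ℝ) : Measure Bool :=
  ENNReal.ofReal p • Measure.dirac true + ENNReal.ofReal (1 - p) • Measure.dirac false

/-!
The Kullback–Leibler divergence of two product measures is the sum of the coordinatewise
divergences, so everything reduces to one coordinate, `p = 1 - e^{-λ}` against `q = 1 - e^{-λ'}`.
As a function of `q`, `KL(Bern p ‖ Bern q)` vanishes at `q = p` and has derivative
`(q - p) / (q (1 - q))`; since `t (1 - t) ≤ t ≤ C₀ λ̄` between `p` and `q`, it grows at least like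
`(p - q)² / (2 C₀ λ̄)`. In the other direction `log x ≤ x - 1` bounds it by the `χ²`-divergence
`(p - q)² / (q (1 - q))`, and `q ≥ λ' / 2`, `1 - q ≥ 1 / 2` give `q (1 - q) ≥ c₀ λ̄ / 4`.
Finally, on `[0, 1/2]` the map `λ ↦ e^{-λ}` has slope between `e^{-1/2}` and `1`, so
`e^{-1} (λ - λ')² ≤ (p - q)² ≤ (λ - λ')²`.
-/

noncomputable def bernKL (p q : ℝ) : ℝ :=
  p * log (p / q) + (1 - p) * log ((1 - p) / (1 - q))

theorem half_mul_sq_le_of_hasDerivAt {F f : ℝ → ℝ} {u v K : ℝ}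
    (hF : ∀ s ∈ Set.uIcc u v, HasDerivAt F (f s) s) (hu : F u = 0)
    (hf : ∀ s ∈ Set.uIcc u v, K * (s - u) ^ 2 ≤ f s * (s - u)) :
    K / 2 * (v - u) ^ 2 ≤ F v := by
  set Φ : ℝ → ℝ := fun s => F s - K / 2 * (s - u) ^ 2
  have hΦ : ∀ s ∈ Set.uIcc u v, HasDerivAt Φ (f s - K * (s - u)) s := fun s hs =>
    ((hF s hs).sub ((((hasDerivAt_id s).sub_const u).pow 2).const_mul (K / 2))).congr_deriv
      (by simp only [id]; ring)
  have hcont : ContinuousOn Φ (Set.uIcc u v) :=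
    fun s hs => (hΦ s hs).continuousAt.continuousWithinAt
  suffices Φ u ≤ Φ v by simpa [Φ, hu] using this
  rcases le_total u v with huv | hvu
  · rw [Set.uIcc_of_le huv] at hΦ hf hcont
    refine monotoneOn_of_hasDerivWithinAt_nonneg (convex_Icc u v) hcont
      (fun s hs => (hΦ s (interior_subset hs)).hasDerivWithinAt) (fun s hs => ?_)
      (Set.left_mem_Icc.2 huv) (Set.right_mem_Icc.2 huv) huv
    rw [interior_Icc] at hs
    have h := hf s (Set.Ioo_subset_Icc_self hs)
    rw [sq, ← mul_assoc] at h
    exact sub_nonneg.2 (le_of_mul_le_mul_right h (sub_pos.2 hs.1))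
  · rw [Set.uIcc_of_ge hvu] at hΦ hf hcont
    refine antitoneOn_of_hasDerivWithinAt_nonpos (convex_Icc v u) hcont
      (fun s hs => (hΦ s (interior_subset hs)).hasDerivWithinAt) (fun s hs => ?_)
      (Set.left_mem_Icc.2 hvu) (Set.right_mem_Icc.2 hvu) hvu
    rw [interior_Icc] at hs
    have h := hf s (Set.Ioo_subset_Icc_self hs)
    rw [sq, ← mul_assoc] at h
    exact sub_nonpos.2 ((mul_le_mul_right_of_neg (sub_neg.2 hs.2)).mp h)

theorem bernKL_self (p : ℝ) : bernKL p p = 0 := by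
  rcases eq_or_ne p 0 with rfl | hp
  · simp [bernKL]
  rcases eq_or_ne p 1 with rfl | hp'
  · simp [bernKL]
  simp [bernKL, hp, sub_ne_zero.2 hp'.symm]

theorem hasDerivAt_bernKL {p q : ℝ} (hp : p ∈ Set.Ioo 0 1) (hq : q ∈ Set.Ioo 0 1) :
    HasDerivAt (bernKL p) ((q - p) / (q * (1 - q))) q := by
  obtain ⟨hp0, hp1⟩ := hp
  obtain ⟨hq0, hq1⟩ := hq
  have hp1' : 0 < 1 - p := sub_pos.2 hp1
  have hq1' : 0 < 1 - q := sub_pos.2 hq1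
  have h₁ := ((hasDerivAt_const q p).fun_div (hasDerivAt_id' q) hq0.ne').log
    (div_pos hp0 hq0).ne'
  have h₂ := ((hasDerivAt_const q (1 - p)).fun_div ((hasDerivAt_id' q).const_sub 1)
    hq1'.ne').log (div_pos hp1' hq1').ne'
  refine ((h₁.const_mul p).add (h₂.const_mul (1 - p))).congr_deriv ?_
  field_simp
  ring

theorem bernKL_le_sq_div {p q : ℝ} (hp : p ∈ Set.Ioo 0 1) (hq : q ∈ Set.Ioo 0 1) :
    bernKL p q ≤ (p - q) ^ 2 / (q * (1 - q)) := by
  obtain ⟨hp0, hp1⟩ := hp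
  obtain ⟨hq0, hq1⟩ := hq
  have hp1' : 0 < 1 - p := sub_pos.2 hp1
  have hq1' : 0 < 1 - q := sub_pos.2 hq1
  calc bernKL p q ≤ p * (p / q - 1) + (1 - p) * ((1 - p) / (1 - q) - 1) := by
        unfold bernKL
        gcongr
        · exact log_le_sub_one_of_pos (by positivity)
        · exact log_le_sub_one_of_pos (by positivity)
    _ = (p - q) ^ 2 / (q * (1 - q)) := by
        field_simp
        ring

theorem sq_div_le_bernKL {p q M : ℝ} (hp : p ∈ Set.Ioo 0 1) (hq : q ∈ Set.Ioo 0 1)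
    (hpM : p ≤ M) (hqM : q ≤ M) : (p - q) ^ 2 / (2 * M) ≤ bernKL p q := by
  have hmem : ∀ s ∈ Set.uIcc p q, s ∈ Set.Ioo 0 1 ∧ s ≤ M := by
    intro s hs
    rcases Set.mem_uIcc.1 hs with h | h <;>
      exact ⟨⟨by linarith [hp.1, hq.1], by linarith [hp.2, hq.2]⟩, by linarith⟩
  have h := half_mul_sq_le_of_hasDerivAt (K := 1 / M)
    (fun s hs => hasDerivAt_bernKL hp (hmem s hs).1) (bernKL_self p) (fun s hs => ?_)
  · convert h using 1
    ring
  · obtain ⟨⟨hs0, hs1⟩, hsM⟩ := hmem s hs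
    rw [one_div_mul_eq_div, div_mul_eq_mul_div, ← sq]
    gcongr
    nlinarith

theorem exp_neg_mul_sub_le_exp_neg_sub_exp_neg (x y : ℝ) :
    exp (-y) * (y - x) ≤ exp (-x) - exp (-y) := by
  have hexp : exp (-x) = exp (-y) * exp (y - x) := by rw [← exp_add]; ring_nf
  nlinarith [add_one_le_exp (y - x), exp_pos (-y)]

theorem sq_exp_neg_sub_exp_neg_le {x y : ℝ} (hx : 0 ≤ x) (hy : 0 ≤ y) :
    (exp (-x) - exp (-y)) ^ 2 ≤ (x - y) ^ 2 := by
  wlog h : x ≤ y generalizing x y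
  · rw [sub_sq_comm, sub_sq_comm x]
    exact this hy hx (le_of_not_ge h)
  have hlow := exp_neg_mul_sub_le_exp_neg_sub_exp_neg x y
  have hup := exp_neg_mul_sub_le_exp_neg_sub_exp_neg y x
  have hx1 : exp (-x) ≤ 1 := exp_le_one_iff.2 (neg_nonpos.2 hx)
  rw [sub_sq_comm x]
  apply pow_le_pow_left₀ (by nlinarith [exp_pos (-y)])
  nlinarith [exp_pos (-x)]

theorem exp_neg_two_mul_mul_sq_le {x y A : ℝ} (hx : x ≤ A) (hy : y ≤ A) :
    exp (-(2 * A)) * (x - y) ^ 2 ≤ (exp (-x) - exp (-y)) ^ 2 := by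
  wlog h : x ≤ y generalizing x y
  · rw [sub_sq_comm, sub_sq_comm (exp (-x))]
    exact this hy hx (le_of_not_ge h)
  have hA : exp (-A) ≤ exp (-y) := exp_le_exp.2 (neg_le_neg hy)
  calc exp (-(2 * A)) * (x - y) ^ 2 = (exp (-A) * (y - x)) ^ 2 := by
        rw [mul_pow, ← exp_nat_mul]; ring_nf
    _ ≤ (exp (-x) - exp (-y)) ^ 2 := by
        gcongr
        exact (mul_le_mul_of_nonneg_right hA (sub_nonneg.2 h)).trans
          (exp_neg_mul_sub_le_exp_neg_sub_exp_neg x y)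

theorem one_sub_exp_neg_mem_Ioo {x : ℝ} (hx : 0 < x) : 1 - exp (-x) ∈ Set.Ioo 0 1 :=
  ⟨sub_pos.2 (exp_lt_one_iff.2 (neg_neg_of_pos hx)), sub_lt_self 1 (exp_pos _)⟩

theorem half_le_one_sub_exp_neg {x : ℝ} (hx0 : 0 ≤ x) (hx1 : x ≤ 1) : x / 2 ≤ 1 - exp (-x) := by
  have h : exp (-x) * (1 + x) ≤ 1 := by
    calc exp (-x) * (1 + x) ≤ exp (-x) * exp x := by gcongr; linarith [add_one_le_exp x]
      _ = 1 := by rw [← exp_add, neg_add_cancel, exp_zero]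
  nlinarith [exp_pos (-x)]

theorem exp_neg_one_div_mul_sq_le_bernKL {l l' A : ℝ} (hl : 0 < l) (hl' : 0 < l') (hlA : l ≤ A)
    (hl'A : l' ≤ A) (hA : A ≤ 1 / 2) :
    exp (-1) / (2 * A) * (l - l') ^ 2 ≤ bernKL (1 - exp (-l)) (1 - exp (-l')) := by
  have hA0 : 0 < A := hl.trans_le hlA
  calc exp (-1) / (2 * A) * (l - l') ^ 2 ≤ exp (-(2 * A)) * (l - l') ^ 2 / (2 * A) := by
        rw [div_mul_eq_mul_div]
        gcongr
        linarith
    _ ≤ (exp (-l) - exp (-l')) ^ 2 / (2 * A) := by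
        gcongr
        exact exp_neg_two_mul_mul_sq_le hlA hl'A
    _ = ((1 - exp (-l)) - (1 - exp (-l'))) ^ 2 / (2 * A) := by ring
    _ ≤ bernKL (1 - exp (-l)) (1 - exp (-l')) :=
        sq_div_le_bernKL (one_sub_exp_neg_mem_Ioo hl) (one_sub_exp_neg_mem_Ioo hl')
          (by linarith [one_sub_le_exp_neg l]) (by linarith [one_sub_le_exp_neg l'])

theorem bernKL_le_four_div_mul_sq {l l' a : ℝ} (ha : 0 < a) (hl : 0 < l) (hal' : a ≤ l')
    (hl' : l' ≤ 1 / 2) : bernKL (1 - exp (-l)) (1 - exp (-l')) ≤ 4 / a * (l - l') ^ 2 := by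
  have hq : a / 2 ≤ 1 - exp (-l') := by
    linarith [half_le_one_sub_exp_neg (ha.le.trans hal') (by linarith)]
  have hq' : 1 / 2 ≤ 1 - (1 - exp (-l')) := by linarith [one_sub_le_exp_neg l']
  calc bernKL (1 - exp (-l)) (1 - exp (-l'))
        ≤ ((1 - exp (-l)) - (1 - exp (-l'))) ^ 2 / ((1 - exp (-l')) * (1 - (1 - exp (-l')))) :=
        bernKL_le_sq_div (one_sub_exp_neg_mem_Ioo hl) (one_sub_exp_neg_mem_Ioo (by linarith))
    _ ≤ (l - l') ^ 2 / (a / 2 * (1 / 2)) := by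
        rw [sub_sub_sub_cancel_left, sub_sq_comm l]
        exact div_le_div₀ (sq_nonneg _) (sq_exp_neg_sub_exp_neg_le (by linarith) hl.le)
          (by positivity) (mul_le_mul hq hq' (by norm_num) (by linarith))
    _ = 4 / a * (l - l') ^ 2 := by
        field_simp
        ring

theorem bern_singleton (p : ℝ) (b : Bool) : bern p {b} = ENNReal.ofReal (cond b p (1 - p)) := by
  cases b <;> simp [bern]

theorem isProbabilityMeasure_bern {p : ℝ} (hp : p ∈ Set.Icc 0 1) : IsProbabilityMeasure (bern p) :=
  ⟨by simp [bern, ← ENNReal.ofReal_add hp.1 (sub_nonneg.2 hp.2)]⟩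

theorem pi_bern_singleton {ι : Type*} [Fintype ι] {p : ι → ℝ} (hp : ∀ i, p i ∈ Set.Icc 0 1)
    (x : ι → Bool) :
    Measure.pi (fun i => bern (p i)) {x} = ENNReal.ofReal (∏ i, cond (x i) (p i) (1 - p i)) := by
  have := fun i => isProbabilityMeasure_bern (hp i)
  rw [Measure.pi_singleton, ENNReal.ofReal_prod_of_nonneg]
  · simp only [bern_singleton]
  · intro i _
    cases x i <;> simp [(hp i).1, (hp i).2]

theorem klDiv_eq_sum_of_fintype {α : Type*} [Fintype α] [MeasurableSpace α]
    [MeasurableSingletonClass α] (P Q : Measure α) [IsFiniteMeasure P] [IsFiniteMeasure Q]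
    (hQ : ∀ x, Q {x} ≠ 0) :
    klDiv P Q = ENNReal.ofReal (∑ x, P.real {x} * log (P.real {x} / Q.real {x})) := by
  set f : α → ℝ≥0∞ := fun x => P {x} / Q {x}
  have hPQ : Q.withDensity f = P := Measure.ext_of_singleton fun x => by
    rw [withDensity_apply _ (measurableSet_singleton x), lintegral_singleton,
      ENNReal.div_mul_cancel (hQ x) (measure_ne_top Q _)]
  have hac : P ≪ Q := hPQ ▸ withDensity_absolutelyContinuous Q f
  have hrn : P.rnDeriv Q =ᵐ[Q] f := by
    conv_lhs => rw [← hPQ]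
    exact Measure.rnDeriv_withDensity Q (measurable_of_finite f)
  have hllr : llr P Q =ᵐ[P] fun x => log (P.real {x} / Q.real {x}) := by
    filter_upwards [hac.ae_le hrn] with x hx
    simp only [llr_def, hx, f, ENNReal.toReal_div, measureReal_def]
  rw [klDiv, if_pos ⟨hac, Integrable.of_finite⟩, integral_congr_ae hllr,
    integral_fintype Integrable.of_finite]
  rfl

theorem sum_pi_prod_mul_apply {ι β : Type*} [Fintype ι] [Fintype β] {w : ι → β → ℝ}
    (hw : ∀ i, ∑ b, w i b = 1) (i : ι) (g : β → ℝ) :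
    ∑ x : ι → β, (∏ j, w j (x j)) * g (x i) = ∑ b, w i b * g b := by
  set v : ι → β → ℝ := fun j b => w j b * if j = i then g b else 1
  have hv : ∀ x : ι → β, (∏ j, w j (x j)) * g (x i) = ∏ j, v j (x j) := fun x => by
    simp only [v, Finset.prod_mul_distrib, Finset.prod_ite_eq', Finset.mem_univ, if_true]
  simp_rw [hv, ← Fintype.prod_sum]
  rw [Finset.prod_eq_single i (fun j _ hji => by simp [v, hji, hw j]) (by simp)]
  simp [v]

theorem sum_pi_prod_mul_log_prod_div_prod {ι β : Type*} [Fintype ι] [Fintype β]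
    {w w' : ι → β → ℝ} (hw : ∀ i b, w i b ≠ 0) (hw' : ∀ i b, w' i b ≠ 0)
    (hsum : ∀ i, ∑ b, w i b = 1) :
    ∑ x : ι → β, (∏ i, w i (x i)) * log ((∏ i, w i (x i)) / ∏ i, w' i (x i))
      = ∑ i, ∑ b, w i b * log (w i b / w' i b) := by
  have hlog : ∀ x : ι → β, log ((∏ i, w i (x i)) / ∏ i, w' i (x i))
      = ∑ i, log (w i (x i) / w' i (x i)) := fun x => by
    rw [← Finset.prod_div_distrib, log_prod]
    exact fun i _ => div_ne_zero (hw i _) (hw' i _)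
  simp_rw [hlog, Finset.mul_sum]
  rw [Finset.sum_comm]
  exact Finset.sum_congr rfl fun i _ => sum_pi_prod_mul_apply hsum i fun b => log (w i b / w' i b)

theorem klDiv_pi_bern {ι : Type*} [Fintype ι] {p q : ι → ℝ} (hp : ∀ i, p i ∈ Set.Ioo 0 1)
    (hq : ∀ i, q i ∈ Set.Ioo 0 1) :
    klDiv (Measure.pi fun i => bern (p i)) (Measure.pi fun i => bern (q i))
      = ENNReal.ofReal (∑ i, bernKL (p i) (q i)) := by
  have hcond : ∀ {r : ι → ℝ}, (∀ i, r i ∈ Set.Ioo 0 1) → ∀ i b, 0 < cond b (r i) (1 - r i) :=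
    fun hr i b => by cases b <;> simp [(hr i).1, (hr i).2]
  have := fun i => isProbabilityMeasure_bern (Set.Ioo_subset_Icc_self (hp i))
  have := fun i => isProbabilityMeasure_bern (Set.Ioo_subset_Icc_self (hq i))
  have hQ : ∀ x, Measure.pi (fun i => bern (q i)) {x} ≠ 0 := fun x => by
    rw [pi_bern_singleton (fun i => Set.Ioo_subset_Icc_self (hq i))]
    exact (ENNReal.ofReal_pos.2 (Finset.prod_pos fun i _ => hcond hq i (x i))).ne'
  simp_rw [klDiv_eq_sum_of_fintype _ _ hQ, measureReal_def,
    pi_bern_singleton (fun i => Set.Ioo_subset_Icc_self (hp i)),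
    pi_bern_singleton (fun i => Set.Ioo_subset_Icc_self (hq i)),
    ENNReal.toReal_ofReal (Finset.prod_nonneg fun i _ => (hcond hp i _).le),
    ENNReal.toReal_ofReal (Finset.prod_nonneg fun i _ => (hcond hq i _).le)]
  rw [sum_pi_prod_mul_log_prod_div_prod (fun i b => (hcond hp i b).ne')
    (fun i b => (hcond hq i b).ne') (fun i => by simp)]
  simp [bernKL]

theorem klDiv_product_bernoulli_frobenius_bounds_general
    (n m : ℕ) (lb c0 C0 : ℝ) (hlb : 0 < lb) (hc0 : 0 < c0)
    (hband : C0 * lb ≤ 1 / 2)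
    (Λ Λ' : Fin n → Fin m → ℝ)
    (hΛ : ∀ i j, Λ i j ∈ Set.Icc (c0 * lb) (C0 * lb))
    (hΛ' : ∀ i j, Λ' i j ∈ Set.Icc (c0 * lb) (C0 * lb)) :
    ENNReal.ofReal ((Real.exp (-1) / (2 * C0 * lb)) * ∑ i, ∑ j, (Λ i j - Λ' i j) ^ 2)
        ≤ klDiv
            (Measure.pi fun ij : Fin n × Fin m => bern (1 - Real.exp (-Λ ij.1 ij.2)))
            (Measure.pi fun ij : Fin n × Fin m => bern (1 - Real.exp (-Λ' ij.1 ij.2)))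
      ∧ klDiv
            (Measure.pi fun ij : Fin n × Fin m => bern (1 - Real.exp (-Λ ij.1 ij.2)))
            (Measure.pi fun ij : Fin n × Fin m => bern (1 - Real.exp (-Λ' ij.1 ij.2)))
          ≤ ENNReal.ofReal ((4 / (c0 * lb)) * ∑ i, ∑ j, (Λ i j - Λ' i j) ^ 2) := by
  have ha : 0 < c0 * lb := mul_pos hc0 hlb
  have hpos : ∀ i j, 0 < Λ i j := fun i j => ha.trans_le (hΛ i j).1
  have hpos' : ∀ i j, 0 < Λ' i j := fun i j => ha.trans_le (hΛ' i j).1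
  rw [klDiv_pi_bern (p := fun ij : Fin n × Fin m => 1 - exp (-Λ ij.1 ij.2))
    (q := fun ij : Fin n × Fin m => 1 - exp (-Λ' ij.1 ij.2))
    (fun ij => one_sub_exp_neg_mem_Ioo (hpos ij.1 ij.2))
    (fun ij => one_sub_exp_neg_mem_Ioo (hpos' ij.1 ij.2))]
  have hsum : ∀ c : ℝ, c * ∑ i, ∑ j, (Λ i j - Λ' i j) ^ 2
      = ∑ ij : Fin n × Fin m, c * (Λ ij.1 ij.2 - Λ' ij.1 ij.2) ^ 2 := fun c => by
    simp_rw [Fintype.sum_prod_type, Finset.mul_sum]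
  refine ⟨ENNReal.ofReal_le_ofReal ?_, ENNReal.ofReal_le_ofReal ?_⟩ <;> rw [hsum] <;>
    refine Finset.sum_le_sum fun ij _ => ?_
  · rw [mul_assoc]
    exact exp_neg_one_div_mul_sq_le_bernKL (hpos _ _) (hpos' _ _) (hΛ _ _).2 (hΛ' _ _).2 hband
  · exact bernKL_le_four_div_mul_sq ha (hpos _ _) (hΛ' _ _).1 ((hΛ' _ _).2.trans hband)

/-- Two-sided local KL/Frobenius comparison for banded product
Bernoulli measures under the Poisson intensity link. -/
theorem klDiv_product_bernoulli_frobenius_bounds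
    (n m : ℕ) (lb c0 C0 : ℝ) (hlb : 0 < lb) (hc0 : 0 < c0) (hc0C0 : c0 ≤ C0)
    (hband : C0 * lb ≤ 1 / 2)
    (Λ Λ' : Fin n → Fin m → ℝ)
    (hΛ : ∀ i j, Λ i j ∈ Set.Icc (c0 * lb) (C0 * lb))
    (hΛ' : ∀ i j, Λ' i j ∈ Set.Icc (c0 * lb) (C0 * lb)) :
    ENNReal.ofReal ((Real.exp (-1) / (2 * C0 * lb)) * ∑ i, ∑ j, (Λ i j - Λ' i j) ^ 2)
        ≤ klDiv
            (Measure.pi fun ij : Fin n × Fin m => bern (1 - Real.exp (-Λ ij.1 ij.2)))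
            (Measure.pi fun ij : Fin n × Fin m => bern (1 - Real.exp (-Λ' ij.1 ij.2)))
      ∧ klDiv
            (Measure.pi fun ij : Fin n × Fin m => bern (1 - Real.exp (-Λ ij.1 ij.2)))
            (Measure.pi fun ij : Fin n × Fin m => bern (1 - Real.exp (-Λ' ij.1 ij.2)))
          ≤ ENNReal.ofReal ((4 / (c0 * lb)) * ∑ i, ∑ j, (Λ i j - Λ' i j) ^ 2) :=
  klDiv_product_bernoulli_frobenius_bounds_general n m lb c0 C0 hlb hc0 hband Λ Λ' hΛ hΛ'
end

section
/- Let n, m ∈ ℕ, λ̄ > 0, and 0 < c₁ ≤ C₁ with C₁·λ̄ ≤ 1/2. Let Λ* = (λ*_{ij}) ∈ ℝ^{n×m} have all entries in [c₁λ̄, C₁λ̄], and let Λ̂ = (λ̂_{ij}) ∈ ℝ^{n×m} have all entries in [c₁λ̄, C₁λ̄]. Then Σ_{i,j} KL( Bern(1 − exp(−λ*_{ij})) ‖ Bern(1 − exp(−λ̂_{ij})) ) ≤ (4 / (c₁·λ̄)) · Σ_{i,j} (λ*_{ij} − λ̂_{ij})². -/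
/-
Bounding each `log` by `log x ≤ x - 1` gives the χ²-bound `KL(p‖q) ≤ (p - q)² / (q (1 - q))`.
Under the link `p = 1 - e^{-λ}` the numerator is at most `(λ* - λ̂)²` because `x ↦ e^{-x}` is
1-Lipschitz on `[0, ∞)`, and for `0 ≤ λ̂ ≤ 1/2` the denominator `(1 - e^{-λ̂}) e^{-λ̂}` is at least
`λ̂ / 4 ≥ c₁ λ̄ / 4`.
-/

open Real

/-- KL divergence between two Bernoulli distributions with parameters `p` and `q`. -/
noncomputable def klBern (p q : ℝ) : ℝ :=
  p * Real.log (p / q) + (1 - p) * Real.log ((1 - p) / (1 - q))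

lemma mul_log_div_le_mul_div_sub_one {p q : ℝ} (hp : 0 ≤ p) (hq : 0 < q) :
    p * log (p / q) ≤ p * (p / q - 1) := by
  rcases hp.eq_or_lt with rfl | hp
  · simp
  · exact mul_le_mul_of_nonneg_left (log_le_sub_one_of_pos (div_pos hp hq)) hp.le

lemma klBern_le_sq_div {p q : ℝ} (hp₀ : 0 ≤ p) (hp₁ : p ≤ 1) (hq₀ : 0 < q) (hq₁ : q < 1) :
    klBern p q ≤ (p - q) ^ 2 / (q * (1 - q)) := by
  have hq₁' : (0 : ℝ) < 1 - q := by linarith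
  calc klBern p q ≤ p * (p / q - 1) + (1 - p) * ((1 - p) / (1 - q) - 1) :=
        add_le_add (mul_log_div_le_mul_div_sub_one hp₀ hq₀)
          (mul_log_div_le_mul_div_sub_one (by linarith) hq₁')
    _ = (p - q) ^ 2 / (q * (1 - q)) := by
        field_simp
        ring

lemma exp_neg_sub_exp_neg_le {x y : ℝ} (hx : 0 ≤ x) (hxy : x ≤ y) :
    exp (-x) - exp (-y) ≤ y - x := by
  have h₁ : exp (-x) ≤ 1 := exp_le_one_iff.mpr (by linarith)
  have h₂ : 1 - exp (-(y - x)) ≤ y - x := by linarith [one_sub_le_exp_neg (y - x)]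
  have h₃ : 0 ≤ 1 - exp (-(y - x)) := by
    linarith [exp_le_one_iff.mpr (show -(y - x) ≤ 0 by linarith)]
  calc exp (-x) - exp (-y) = exp (-x) * (1 - exp (-(y - x))) := by
        rw [mul_sub, mul_one, ← exp_add]; ring_nf
    _ ≤ 1 * (y - x) := mul_le_mul h₁ h₂ h₃ zero_le_one
    _ = y - x := one_mul _

lemma abs_exp_neg_sub_exp_neg_le {x y : ℝ} (hx : 0 ≤ x) (hy : 0 ≤ y) :
    |exp (-x) - exp (-y)| ≤ |x - y| := by
  rcases le_total x y with hxy | hyx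
  · have hmono : exp (-y) ≤ exp (-x) := exp_le_exp.mpr (neg_le_neg hxy)
    rw [abs_of_nonneg (sub_nonneg.mpr hmono), abs_of_nonpos (sub_nonpos.mpr hxy)]
    linarith [exp_neg_sub_exp_neg_le hx hxy]
  · have hmono : exp (-x) ≤ exp (-y) := exp_le_exp.mpr (neg_le_neg hyx)
    rw [abs_of_nonpos (sub_nonpos.mpr hmono), abs_of_nonneg (sub_nonneg.mpr hyx)]
    linarith [exp_neg_sub_exp_neg_le hy hyx]

lemma div_four_le_one_sub_exp_neg_mul_exp_neg {x : ℝ} (hx₀ : 0 ≤ x) (hx₁ : x ≤ 1 / 2) :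
    x / 4 ≤ (1 - exp (-x)) * exp (-x) := by
  have hlow : x * exp (-x) ≤ 1 - exp (-x) := by
    have h : exp x * exp (-x) = 1 := by rw [← exp_add, add_neg_cancel, exp_zero]
    nlinarith [add_one_le_exp x, exp_pos (-x)]
  have hhalf : 1 - x ≤ exp (-x) := one_sub_le_exp_neg x
  nlinarith [exp_pos (-x)]

lemma klBern_one_sub_exp_neg_le {a b t : ℝ} (ha : 0 ≤ a) (ht : 0 < t) (htb : t ≤ b)
    (hb : b ≤ 1 / 2) :
    klBern (1 - exp (-a)) (1 - exp (-b)) ≤ 4 / t * (a - b) ^ 2 := by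
  have hb₀ : 0 < b := ht.trans_le htb
  have hexp_a : exp (-a) ≤ 1 := exp_le_one_iff.mpr (by linarith)
  have hexp_b : exp (-b) < 1 := exp_lt_one_iff.mpr (by linarith)
  have hnum : (1 - exp (-a) - (1 - exp (-b))) ^ 2 ≤ (a - b) ^ 2 := by
    rw [sq_le_sq, show 1 - exp (-a) - (1 - exp (-b)) = exp (-b) - exp (-a) by ring, abs_sub_comm a b]
    exact abs_exp_neg_sub_exp_neg_le hb₀.le ha
  have hden : t / 4 ≤ (1 - exp (-b)) * (1 - (1 - exp (-b))) := by
    rw [sub_sub_cancel]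
    linarith [div_four_le_one_sub_exp_neg_mul_exp_neg hb₀.le hb]
  calc klBern (1 - exp (-a)) (1 - exp (-b))
      ≤ (1 - exp (-a) - (1 - exp (-b))) ^ 2 / ((1 - exp (-b)) * (1 - (1 - exp (-b)))) :=
        klBern_le_sq_div (by linarith) (by linarith [exp_pos (-a)]) (by linarith)
          (by linarith [exp_pos (-b)])
    _ ≤ (a - b) ^ 2 / (t / 4) := div_le_div₀ (sq_nonneg _) hnum (by positivity) hden
    _ = 4 / t * (a - b) ^ 2 := by field_simp

theorem sum_klBern_le_frobenius_general
    (n m : ℕ) (lb c1 C1 : ℝ) (hlb : 0 < lb) (hc1 : 0 < c1)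
    (hband : C1 * lb ≤ 1 / 2)
    (Λs Λh : Fin n → Fin m → ℝ)
    (hΛs : ∀ i j, Λs i j ∈ Set.Icc (c1 * lb) (C1 * lb))
    (hΛh : ∀ i j, Λh i j ∈ Set.Icc (c1 * lb) (C1 * lb)) :
    ∑ i, ∑ j, klBern (1 - Real.exp (-Λs i j)) (1 - Real.exp (-Λh i j))
      ≤ (4 / (c1 * lb)) * ∑ i, ∑ j, (Λs i j - Λh i j) ^ 2 := by
  have ht : 0 < c1 * lb := mul_pos hc1 hlb
  have hentry : ∀ i j, klBern (1 - exp (-Λs i j)) (1 - exp (-Λh i j))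
      ≤ 4 / (c1 * lb) * (Λs i j - Λh i j) ^ 2 := fun i j =>
    klBern_one_sub_exp_neg_le (ht.le.trans (hΛs i j).1) ht (hΛh i j).1
      ((hΛh i j).2.trans hband)
  simp_rw [Finset.mul_sum]
  exact Finset.sum_le_sum fun i _ => Finset.sum_le_sum fun j _ => hentry i j

/-- Frobenius upper bound on the summed Bernoulli KL divergences under
the intensity link, for banded intensity matrices. -/
theorem sum_klBern_le_frobenius
    (n m : ℕ) (lb c1 C1 : ℝ) (hlb : 0 < lb) (hc1 : 0 < c1) (hc1C1 : c1 ≤ C1)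
    (hband : C1 * lb ≤ 1 / 2)
    (Λs Λh : Fin n → Fin m → ℝ)
    (hΛs : ∀ i j, Λs i j ∈ Set.Icc (c1 * lb) (C1 * lb))
    (hΛh : ∀ i j, Λh i j ∈ Set.Icc (c1 * lb) (C1 * lb)) :
    ∑ i, ∑ j, klBern (1 - Real.exp (-Λs i j)) (1 - Real.exp (-Λh i j))
      ≤ (4 / (c1 * lb)) * ∑ i, ∑ j, (Λs i j - Λh i j) ^ 2 :=
  sum_klBern_le_frobenius_general n m lb c1 C1 hlb hc1 hband Λs Λh hΛs hΛh
end

section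
/- Let 0 < c₀ ≤ C₀. There exist constants a₁ > 0 and a₂ > 0, depending only on c₀ and C₀, such that the following holds: for all n, m ∈ ℕ, all λ̄ > 0 with C₀·λ̄ ≤ 1/2, and all matrices Λ = (λ_{ij}), Λ' = (λ'_{ij}) ∈ ℝ^{n×m} with all entries in [c₀λ̄, C₀λ̄], setting p_{ij} = 1 − exp(−λ_{ij}) and p'_{ij} = 1 − exp(−λ'_{ij}), one has a₁ · Σ_{i,j} (λ_{ij} − λ'_{ij})² / λ̄ ≤ Σ_{i,j} ( 1 − √(p_{ij} p'_{ij}) − √((1 − p_{ij})(1 − p'_{ij})) ) ≤ a₂ · Σ_{i,j} (λ_{ij} − λ'_{ij})² / λ̄. -/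
/-!
Write `p = 1 - exp (-λ)`. For Bernoulli parameters the Hellinger affinity gap splits as
`((√p - √p')² + (√(1-p) - √(1-p'))²) / 2`, and `(√p - √p')² (√p + √p')² = (p - p')²`.
On `[0, 1/2]` the map `λ ↦ exp (-λ)` is bi-Lipschitz with constants `1/2` and `1`, so
`(p - p')² ≍ (λ - λ')²`, while `p ≍ λ` and `1 - p ≍ 1`. Hence each entry contributes
`≍ (λ - λ')² / λ̄`.
-/

open Real Set

noncomputable def bernoulliHellinger (p p' : ℝ) : ℝ :=
  1 - √(p * p') - √((1 - p) * (1 - p'))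

theorem bernoulliHellinger_eq {p p' : ℝ} (hp : p ∈ Icc (0 : ℝ) 1) (hp' : p' ∈ Icc (0 : ℝ) 1) :
    bernoulliHellinger p p' = ((√p - √p') ^ 2 + (√(1 - p) - √(1 - p')) ^ 2) / 2 := by
  have hq : 0 ≤ 1 - p := by linarith [hp.2]
  have hq' : 0 ≤ 1 - p' := by linarith [hp'.2]
  rw [bernoulliHellinger, sqrt_mul hp.1, sqrt_mul hq]
  linear_combination (-sq_sqrt hp.1 - sq_sqrt hp'.1 - sq_sqrt hq - sq_sqrt hq') / 2

theorem sqrt_sub_sqrt_mul_sqrt_add_sqrt {a b : ℝ} (ha : 0 ≤ a) (hb : 0 ≤ b) :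
    (√a - √b) * (√a + √b) = a - b := by
  linear_combination sq_sqrt ha - sq_sqrt hb

theorem sqrt_sub_sqrt_sq_mul_add_le {a b : ℝ} (ha : 0 ≤ a) (hb : 0 ≤ b) :
    (√a - √b) ^ 2 * (a + b) ≤ (a - b) ^ 2 := by
  have hfactor : (a - b) ^ 2 = (√a - √b) ^ 2 * (√a + √b) ^ 2 := by
    rw [← mul_pow, sqrt_sub_sqrt_mul_sqrt_add_sqrt ha hb]
  have hsum : a + b ≤ (√a + √b) ^ 2 := by
    nlinarith [sq_sqrt ha, sq_sqrt hb, mul_nonneg (sqrt_nonneg a) (sqrt_nonneg b)]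
  rw [hfactor]
  exact mul_le_mul_of_nonneg_left hsum (sq_nonneg _)

theorem sq_sub_le_two_mul_add_mul_sqrt_sub_sqrt_sq {a b : ℝ} (ha : 0 ≤ a) (hb : 0 ≤ b) :
    (a - b) ^ 2 ≤ 2 * (a + b) * (√a - √b) ^ 2 := by
  have hfactor : (a - b) ^ 2 = (√a - √b) ^ 2 * (√a + √b) ^ 2 := by
    rw [← mul_pow, sqrt_sub_sqrt_mul_sqrt_add_sqrt ha hb]
  have hsum : (√a + √b) ^ 2 ≤ 2 * (a + b) := by
    nlinarith [sq_sqrt ha, sq_sqrt hb, sq_nonneg (√a - √b)]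
  rw [hfactor, mul_comm (2 * (a + b))]
  exact mul_le_mul_of_nonneg_left hsum (sq_nonneg _)

theorem exp_mul_sub_le_exp_sub_exp (a b : ℝ) : exp a * (b - a) ≤ exp b - exp a := by
  have h := mul_le_mul_of_nonneg_left (add_one_le_exp (b - a)) (exp_pos a).le
  rw [← exp_add, add_sub_cancel] at h
  linarith

theorem exp_sub_exp_le_exp_mul_sub (a b : ℝ) : exp b - exp a ≤ exp b * (b - a) := by
  have h := mul_le_mul_of_nonneg_left (add_one_le_exp (a - b)) (exp_pos b).le
  rw [← exp_add, add_sub_cancel] at h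
  linarith

theorem half_le_exp_neg {x : ℝ} (hx : x ≤ 1 / 2) : 1 / 2 ≤ exp (-x) := by
  linarith [one_sub_le_exp_neg x]

theorem one_sub_exp_neg_mem_Icc {x : ℝ} (hx : 0 ≤ x) (hx' : x ≤ 1 / 2) :
    1 - exp (-x) ∈ Icc (x / 2) x := by
  have h := exp_mul_sub_le_exp_sub_exp (-x) 0
  rw [exp_zero, zero_sub, neg_neg] at h
  constructor
  · nlinarith [half_le_exp_neg hx']
  · linarith [one_sub_le_exp_neg x]

theorem sq_exp_neg_sub_exp_neg_mem_Icc {x y : ℝ} (hx : 0 ≤ x) (hy : 0 ≤ y)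
    (hx' : x ≤ 1 / 2) (hy' : y ≤ 1 / 2) :
    (exp (-x) - exp (-y)) ^ 2 ∈ Icc ((x - y) ^ 2 / 4) ((x - y) ^ 2) := by
  wlog hxy : x ≤ y generalizing x y
  · rw [← neg_sub (exp (-y)), ← neg_sub y, neg_sq, neg_sq]
    exact this hy hx hy' hx' (le_of_not_ge hxy)
  have hlow := exp_mul_sub_le_exp_sub_exp (-y) (-x)
  have hupp := exp_sub_exp_le_exp_mul_sub (-y) (-x)
  have hexp : exp (-x) ≤ 1 := exp_le_one_iff.2 (by linarith)
  rw [neg_sub_neg] at hlow hupp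
  have hge : (y - x) / 2 ≤ exp (-x) - exp (-y) := by nlinarith [half_le_exp_neg hy']
  have hle : exp (-x) - exp (-y) ≤ y - x := by nlinarith
  constructor <;> nlinarith

theorem sq_sub_le_mul_bernoulliHellinger {x y b : ℝ} (hx : 0 ≤ x) (hy : 0 ≤ y)
    (hxb : x ≤ b) (hyb : y ≤ b) (hb : b ≤ 1 / 2) :
    (x - y) ^ 2 ≤ 32 * b * bernoulliHellinger (1 - exp (-x)) (1 - exp (-y)) := by
  obtain ⟨hpx, hpx'⟩ := one_sub_exp_neg_mem_Icc hx (hxb.trans hb)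
  obtain ⟨hpy, hpy'⟩ := one_sub_exp_neg_mem_Icc hy (hyb.trans hb)
  have hdiff := (sq_exp_neg_sub_exp_neg_mem_Icc hx hy (hxb.trans hb) (hyb.trans hb)).1
  set p := 1 - exp (-x)
  set p' := 1 - exp (-y)
  have hp : p ∈ Icc (0 : ℝ) 1 := ⟨by linarith, by linarith⟩
  have hp' : p' ∈ Icc (0 : ℝ) 1 := ⟨by linarith, by linarith⟩
  have hpp' : (p - p') ^ 2 = (exp (-x) - exp (-y)) ^ 2 := by rw [sub_sq_comm]; ring
  have hsqrt : (x - y) ^ 2 ≤ 16 * b * (√p - √p') ^ 2 := by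
    have hsum : 2 * (p + p') ≤ 4 * b := by linarith
    have := sq_sub_le_two_mul_add_mul_sqrt_sub_sqrt_sq hp.1 hp'.1
    nlinarith [mul_le_mul_of_nonneg_right hsum (sq_nonneg (√p - √p'))]
  rw [bernoulliHellinger_eq hp hp']
  nlinarith [sq_nonneg (√(1 - p) - √(1 - p')), hx.trans hxb]

theorem mul_bernoulliHellinger_le_sq_sub {x y a : ℝ} (ha : 0 ≤ a) (hax : a ≤ x) (hay : a ≤ y)
    (hx : x ≤ 1 / 2) (hy : y ≤ 1 / 2) :
    a * bernoulliHellinger (1 - exp (-x)) (1 - exp (-y)) ≤ (x - y) ^ 2 := by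
  obtain ⟨hpx, hpx'⟩ := one_sub_exp_neg_mem_Icc (ha.trans hax) hx
  obtain ⟨hpy, hpy'⟩ := one_sub_exp_neg_mem_Icc (ha.trans hay) hy
  have hdiff := (sq_exp_neg_sub_exp_neg_mem_Icc (ha.trans hax) (ha.trans hay) hx hy).2
  set p := 1 - exp (-x)
  set p' := 1 - exp (-y)
  have hp : p ∈ Icc (0 : ℝ) 1 := ⟨by linarith, by linarith⟩
  have hp' : p' ∈ Icc (0 : ℝ) 1 := ⟨by linarith, by linarith⟩
  have hpp' : (p - p') ^ 2 = (exp (-x) - exp (-y)) ^ 2 := by rw [sub_sq_comm]; ring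
  have hsqrt : a * (√p - √p') ^ 2 ≤ (x - y) ^ 2 := by
    have := sqrt_sub_sqrt_sq_mul_add_le hp.1 hp'.1
    nlinarith [sq_nonneg (√p - √p')]
  have hsqrt' : (√(exp (-x)) - √(exp (-y))) ^ 2 ≤ (x - y) ^ 2 := by
    have := sqrt_sub_sqrt_sq_mul_add_le (exp_pos (-x)).le (exp_pos (-y)).le
    nlinarith [half_le_exp_neg hx, half_le_exp_neg hy, sq_nonneg (√(exp (-x)) - √(exp (-y)))]
  rw [bernoulliHellinger_eq hp hp', sub_sub_cancel, sub_sub_cancel]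
  nlinarith [sq_nonneg (x - y)]

/-- Two-sided Hellinger/Frobenius comparison for banded intensity matrices
under the Poisson intensity link, with constants depending only on `c0, C0`. -/
theorem hellinger_frobenius_equivalence (c0 C0 : ℝ) (hc0 : 0 < c0) (hc0C0 : c0 ≤ C0) :
    ∃ a1 a2 : ℝ, 0 < a1 ∧ 0 < a2 ∧
      ∀ (n m : ℕ) (lb : ℝ), 0 < lb → C0 * lb ≤ 1 / 2 →
        ∀ Λ Λ' : Fin n → Fin m → ℝ,
          (∀ i j, Λ i j ∈ Set.Icc (c0 * lb) (C0 * lb)) →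
          (∀ i j, Λ' i j ∈ Set.Icc (c0 * lb) (C0 * lb)) →
          a1 * (∑ i, ∑ j, (Λ i j - Λ' i j) ^ 2) / lb
              ≤ (∑ i, ∑ j,
                  (1 - Real.sqrt ((1 - Real.exp (-Λ i j)) * (1 - Real.exp (-Λ' i j)))
                    - Real.sqrt ((1 - (1 - Real.exp (-Λ i j)))
                        * (1 - (1 - Real.exp (-Λ' i j))))))
            ∧ (∑ i, ∑ j,
                  (1 - Real.sqrt ((1 - Real.exp (-Λ i j)) * (1 - Real.exp (-Λ' i j)))
                    - Real.sqrt ((1 - (1 - Real.exp (-Λ i j)))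
                        * (1 - (1 - Real.exp (-Λ' i j))))))
                ≤ a2 * (∑ i, ∑ j, (Λ i j - Λ' i j) ^ 2) / lb := by
  have hC0 : 0 < C0 := hc0.trans_le hc0C0
  refine ⟨1 / (32 * C0), 1 / c0, by positivity, by positivity, ?_⟩
  intro n m lb hlb hhalf Λ Λ' hΛ hΛ'
  have hlow : 0 < c0 * lb := by positivity
  have lower : ∑ i, ∑ j, (Λ i j - Λ' i j) ^ 2 ≤
      32 * (C0 * lb) * ∑ i, ∑ j, bernoulliHellinger (1 - exp (-Λ i j)) (1 - exp (-Λ' i j)) := by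
    simp_rw [Finset.mul_sum]
    gcongr with i _ j _
    exact sq_sub_le_mul_bernoulliHellinger (hlow.le.trans (hΛ i j).1)
      (hlow.le.trans (hΛ' i j).1) (hΛ i j).2 (hΛ' i j).2 hhalf
  have upper : c0 * lb * ∑ i, ∑ j, bernoulliHellinger (1 - exp (-Λ i j)) (1 - exp (-Λ' i j)) ≤
      ∑ i, ∑ j, (Λ i j - Λ' i j) ^ 2 := by
    simp_rw [Finset.mul_sum]
    gcongr with i _ j _
    exact mul_bernoulliHellinger_le_sq_sub hlow.le (hΛ i j).1 (hΛ' i j).1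
      ((hΛ i j).2.trans hhalf) ((hΛ' i j).2.trans hhalf)
  unfold bernoulliHellinger at lower upper
  constructor
  · rw [div_le_iff₀ hlb, div_mul_eq_mul_div, div_le_iff₀ (by positivity)]
    linarith
  · rw [le_div_iff₀ hlb, div_mul_eq_mul_div, le_div_iff₀ hc0]
    linarith
end
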